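/- arXiv:1605.02252 — 10 statements merged into one kernel-verified Lean document; each statement's English description precedes it below -/
import Mathlib

section
/- Let k ∈ ℤ with k ≠ 0, let f : ℤ → F be any function, and let R : A_ω → A_ω be the F-linear map determined by R(L_m) = f(m+k)·L_{m+k} for all m ∈ ℤ. Then R is a Rota–Baxter operator of weight 1 on A_ω if and only if f(m) = 0 for all m ∈ ℤ (equivalently, R = 0). -/
/-- The determinant `D(l,m,n)` defining the structure constants of the simple
3-Lie algebra `A_ω`. -/
noncomputable def Dw (F : Type*) [Field F] (l m n : ℤ) : F :=
  (-1 : F) ^ l * ((n : F) - (m : F)) - (-1 : F) ^ m * ((n : F) - (l : F)) +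
    (-1 : F) ^ n * ((m : F) - (l : F))

/-- The unique `F`-trilinear bracket on `A_ω = ℤ →₀ F` with
`[L_l, L_m, L_n] = D(l,m,n) • L_{l+m+n-1}` on basis vectors. -/
noncomputable def tripleBracket (F : Type*) [Field F] (x y z : ℤ →₀ F) : ℤ →₀ F :=
  x.sum fun l a => y.sum fun m b => z.sum fun n c =>
    Finsupp.single (l + m + n - 1) (a * b * c * Dw F l m n)

/-!
Applied to `L_l, L_m, L_n`, every term of the Rota–Baxter identity is homogeneous of degree
`l + m + n - 1 + jk` for some `j ∈ {1, 2, 3}`, and the only term of degree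
`l + m + n - 1 + k` is `R [L_l, L_m, L_n] = D(l,m,n) f(l+m+n-1+k) L_{l+m+n-1+k}`.
Hence `D(l,m,n) f(l+m+n-1+k) = 0`, and every degree is `l + m + n - 1` for some
`l, m, n` with `D(l,m,n) ≠ 0`.
-/

section RotaBaxter

variable (F : Type*) [Field F]

def IsRotaBaxter (R : (ℤ →₀ F) →ₗ[F] (ℤ →₀ F)) : Prop :=
  ∀ x₁ x₂ x₃ : ℤ →₀ F,
    tripleBracket F (R x₁) (R x₂) (R x₃) =
      R (tripleBracket F (R x₁) (R x₂) x₃ + tripleBracket F (R x₁) x₂ (R x₃) +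
          tripleBracket F x₁ (R x₂) (R x₃) + tripleBracket F (R x₁) x₂ x₃ +
          tripleBracket F x₁ (R x₂) x₃ + tripleBracket F x₁ x₂ (R x₃) +
          tripleBracket F x₁ x₂ x₃)

lemma tripleBracket_single (l m n : ℤ) (a b c : F) :
    tripleBracket F (Finsupp.single l a) (Finsupp.single m b) (Finsupp.single n c) =
      Finsupp.single (l + m + n - 1) (a * b * c * Dw F l m n) := by
  simp only [tripleBracket, Finsupp.sum_single_index, zero_mul, mul_zero,
    Finsupp.single_zero]

lemma isRotaBaxter_zero : IsRotaBaxter F 0 := by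
  intro x₁ x₂ x₃
  simp [tripleBracket]

lemma Dw_zero_one_ne_zero [CharZero F] {n : ℤ} (h₀ : n ≠ 0) (h₁ : n ≠ 1) :
    Dw F 0 1 n ≠ 0 := by
  -- `D(0,1,n) = 2n - 1 + (-1)^n`
  unfold Dw
  rcases Int.even_or_odd n with he | ho
  · rw [he.neg_one_zpow]
    push_cast
    intro hc
    exact h₀ (by exact_mod_cast (by linear_combination hc / 2 : (n : F) = 0))
  · rw [ho.neg_one_zpow]
    push_cast
    intro hc
    exact h₁ (by exact_mod_cast (by linear_combination hc / 2 : (n : F) = 1))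

lemma exists_Dw_ne_zero [CharZero F] (s : ℤ) :
    ∃ l m n : ℤ, l + m + n = s ∧ Dw F l m n ≠ 0 := by
  by_cases hs : s = 1 ∨ s = 2
  · refine ⟨2, 1, s - 3, by ring, ?_⟩
    unfold Dw
    rcases hs with rfl | rfl <;> norm_num
  · exact ⟨0, 1, s - 1, by ring, Dw_zero_one_ne_zero F (by omega) (by omega)⟩

section Shift

variable {F} {k : ℤ} {f : ℤ → F} {R : (ℤ →₀ F) →ₗ[F] (ℤ →₀ F)}

lemma apply_single_of_shift
    (hR : ∀ m : ℤ, R (Finsupp.single m 1) = f (m + k) • Finsupp.single (m + k) (1 : F))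
    (s : ℤ) (v : F) : R (Finsupp.single s v) = Finsupp.single (s + k) (v * f (s + k)) := by
  rw [← mul_one v, ← Finsupp.smul_single', map_smul, hR, smul_smul, Finsupp.smul_single',
    mul_one, mul_one]

lemma IsRotaBaxter.Dw_mul_eq_zero_of_shift (hk : k ≠ 0)
    (hR : ∀ m : ℤ, R (Finsupp.single m 1) = f (m + k) • Finsupp.single (m + k) (1 : F))
    (h : IsRotaBaxter F R) (l m n : ℤ) : Dw F l m n * f (l + m + n - 1 + k) = 0 := by
  have h₁ := h (Finsupp.single l 1) (Finsupp.single m 1) (Finsupp.single n 1)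
  simp only [apply_single_of_shift hR, tripleBracket_single, map_add] at h₁
  have h₂ := DFunLike.congr_fun h₁ (l + m + n - 1 + k)
  simp only [Finsupp.add_apply, Finsupp.single_apply] at h₂
  rw [if_neg (by omega), if_neg (by omega), if_neg (by omega), if_neg (by omega),
    if_neg (by omega), if_neg (by omega), if_neg (by omega)] at h₂
  simpa using h₂.symm

end Shift

end RotaBaxter

theorem statement0 (F : Type*) [Field F] [CharZero F] (k : ℤ) (hk : k ≠ 0)
    (f : ℤ → F) (R : (ℤ →₀ F) →ₗ[F] (ℤ →₀ F))
    (hR : ∀ m : ℤ, R (Finsupp.single m 1) = f (m + k) • Finsupp.single (m + k) (1 : F)) :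
    (∀ x₁ x₂ x₃ : ℤ →₀ F,
        tripleBracket F (R x₁) (R x₂) (R x₃) =
          R (tripleBracket F (R x₁) (R x₂) x₃ + tripleBracket F (R x₁) x₂ (R x₃) +
              tripleBracket F x₁ (R x₂) (R x₃) + tripleBracket F (R x₁) x₂ x₃ +
              tripleBracket F x₁ (R x₂) x₃ + tripleBracket F x₁ x₂ (R x₃) +
              tripleBracket F x₁ x₂ x₃)) ↔
      ∀ m : ℤ, f m = 0 := by
  change IsRotaBaxter F R ↔ _
  constructor
  · intro h t
    obtain ⟨l, m, n, hs, hD⟩ := exists_Dw_ne_zero F (t - k + 1)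
    have := h.Dw_mul_eq_zero_of_shift hk hR l m n
    rwa [show l + m + n - 1 + k = t by omega, mul_eq_zero, or_iff_right hD] at this
  · intro hf
    obtain rfl : R = 0 := Finsupp.lhom_ext fun s v => by
      simp [apply_single_of_shift hR, hf]
    exact isRotaBaxter_zero F
end

section
/- If f satisfies the homogeneous Rota–Baxter equations (odd) and (even) and f(0) + f(1) + 1 ≠ 0, then f(m)·(f(m) + 1) = 0 for every m ∈ ℤ with m ≠ 0 and m ≠ 1. -/
/-- The "odd" homogeneous Rota–Baxter equation. -/
def OddRB {F : Type*} [Field F] (f : ℤ → F) : Prop :=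
  ∀ l m n : ℤ, l ≠ m →
    f (2*l+1) * f (2*m+1) * f (2*n) =
      (f (2*l+1) * f (2*m+1) + f (2*l+1) * f (2*n) + f (2*m+1) * f (2*n) +
        f (2*l+1) + f (2*m+1) + f (2*n) + 1) * f (2*l+2*m+2*n+1)

/-- The "even" homogeneous Rota–Baxter equation. -/
def EvenRB {F : Type*} [Field F] (f : ℤ → F) : Prop :=
  ∀ l m n : ℤ, m ≠ n →
    f (2*l+1) * f (2*m) * f (2*n) =
      (f (2*l+1) * f (2*m) + f (2*l+1) * f (2*n) + f (2*m) * f (2*n) +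
        f (2*l+1) + f (2*m) + f (2*n) + 1) * f (2*l+2*m+2*n)

theorem statement2 (F : Type*) [Field F] [CharZero F] (f : ℤ → F)
    (hodd : OddRB f) (heven : EvenRB f) (h01 : f 0 + f 1 + 1 ≠ 0) :
    ∀ m : ℤ, m ≠ 0 → m ≠ 1 → f m * (f m + 1) = 0 := by
  intro m hm0 hm1
  rcases Int.even_or_odd m with ⟨k, hk⟩ | ⟨k, hk⟩
  · -- m = 2k, k ≠ 0
    have hk0 : k ≠ (0:ℤ) := by omega
    have h := heven 0 k 0 hk0
    norm_num at h
    rw [show k + k = 2*k by ring] at hk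
    subst hk
    have key : f (2*k) * (f (2*k) + 1) * (f 0 + f 1 + 1) = 0 := by
      linear_combination -h
    rcases mul_eq_zero.mp key with h' | h'
    · exact h'
    · exact absurd h' h01
  · -- m = 2k+1, k ≠ 0
    have hk0 : k ≠ (0:ℤ) := by omega
    have h := hodd k 0 0 hk0
    norm_num at h
    subst hk
    have key : f (2*k+1) * (f (2*k+1) + 1) * (f 0 + f 1 + 1) = 0 := by
      linear_combination -h
    rcases mul_eq_zero.mp key with h' | h'
    · exact h'
    · exact absurd h' h01
end

section
/- Suppose f(0) + f(1) + 1 ≠ 0 and at least one of the sets W₁, W₂, U₁, U₂ is finite. Then f satisfies the homogeneous Rota–Baxter equations (odd) and (even) if and only if one of the following holds: (1) f(m) = 0 for all m ∈ ℤ; (2) f(m) = −1 for all m ∈ ℤ; (3) f(2m) = 0 and f(2m+1) = −1 for all m ∈ ℤ with m ≠ 0, and f(0)·(f(1)+1) = 0; (4) f(2m) = −1 and f(2m+1) = 0 for all m ∈ ℤ with m ≠ 0, and f(1)·(f(0)+1) = 0. -/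
/-- `W₁ = {2m : m ∈ ℤ, m ≠ 0, f(2m) ≠ 0}`. -/
def W1 {F : Type*} [Field F] (f : ℤ → F) : Set ℤ :=
  {x | ∃ m : ℤ, m ≠ 0 ∧ f (2*m) ≠ 0 ∧ x = 2*m}

/-- `W₂ = {2m : m ∈ ℤ, m ≠ 0, f(2m) = 0}`. -/
def W2 {F : Type*} [Field F] (f : ℤ → F) : Set ℤ :=
  {x | ∃ m : ℤ, m ≠ 0 ∧ f (2*m) = 0 ∧ x = 2*m}

/-- `U₁ = {2m+1 : m ∈ ℤ, m ≠ 0, f(2m+1) ≠ 0}`. -/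
def U1 {F : Type*} [Field F] (f : ℤ → F) : Set ℤ :=
  {x | ∃ m : ℤ, m ≠ 0 ∧ f (2*m+1) ≠ 0 ∧ x = 2*m+1}

/-- `U₂ = {2m+1 : m ∈ ℤ, m ≠ 0, f(2m+1) = 0}`. -/
def U2 {F : Type*} [Field F] (f : ℤ → F) : Set ℤ :=
  {x | ∃ m : ℤ, m ≠ 0 ∧ f (2*m+1) = 0 ∧ x = 2*m+1}

section Aux
variable {F : Type*} [Field F]

lemma negEvenRB (f g : ℤ → F) (hg : ∀ x, g x = -1 - f x) (h : EvenRB f) : EvenRB g := by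
  intro l m n hmn
  simp only [hg]
  linear_combination - h l m n hmn

lemma negOddRB (f g : ℤ → F) (hg : ∀ x, g x = -1 - f x) (h : OddRB f) : OddRB g := by
  intro l m n hmn
  simp only [hg]
  linear_combination - h l m n hmn

lemma valP (f : ℤ → F) (hE : EvenRB f) (h01 : f 0 + f 1 + 1 ≠ 0) (k : ℤ) (hk : k ≠ 0) :
    f (2*k) = 0 ∨ f (2*k) = -1 := by
  by_contra hc
  push_neg at hc
  obtain ⟨h1, h2⟩ := hc
  have h := hE 0 k 0 hk
  rw [show (2*(0:ℤ)+2*k+2*0) = 2*k by ring] at h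
  rw [show (2*(0:ℤ)+1) = 1 by norm_num] at h
  rw [show (2*(0:ℤ)) = 0 by norm_num] at h
  have key : f (2*k) * (f (2*k) + 1) * (f 0 + f 1 + 1) = 0 := by linear_combination - h
  have h2' : f (2*k) + 1 ≠ 0 := fun hh => h2 (by linear_combination hh)
  rcases mul_eq_zero.mp key with hh | hh
  · rcases mul_eq_zero.mp hh with hh' | hh'
    · exact h1 hh'
    · exact h2' hh'
  · exact h01 hh

lemma valQ (f : ℤ → F) (hO : OddRB f) (h01 : f 0 + f 1 + 1 ≠ 0) (k : ℤ) (hk : k ≠ 0) :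
    f (2*k+1) = 0 ∨ f (2*k+1) = -1 := by
  by_contra hc
  push_neg at hc
  obtain ⟨h1, h2⟩ := hc
  have h := hO 0 k 0 (Ne.symm hk)
  rw [show (2*(0:ℤ)+2*k+2*0+1) = 2*k+1 by ring] at h
  rw [show (2*(0:ℤ)+1) = 1 by norm_num] at h
  rw [show (2*(0:ℤ)) = 0 by norm_num] at h
  have key : f (2*k+1) * (f (2*k+1) + 1) * (f 0 + f 1 + 1) = 0 := by linear_combination - h
  have h2' : f (2*k+1) + 1 ≠ 0 := fun hh => h2 (by linear_combination hh)
  rcases mul_eq_zero.mp key with hh | hh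
  · rcases mul_eq_zero.mp hh with hh' | hh'
    · exact h1 hh'
    · exact h2' hh'
  · exact h01 hh

end Aux
section Aux2
variable {F : Type*} [Field F]

/-- Contradiction: even part mixed, odd part ≡ 0 away from 0. -/
lemma caseC5 (f : ℤ → F) (hE : EvenRB f) (h01 : f 0 + f 1 + 1 ≠ 0)
    (hq : ∀ k : ℤ, k ≠ 0 → f (2*k+1) = 0)
    (a b : ℤ) (ha : a ≠ 0) (hb : b ≠ 0) (hpa : f (2*a) = -1) (hpb : f (2*b) = 0) : False := by
  have hab : a ≠ b := by
    intro h; rw [h, hpb] at hpa; exact one_ne_zero (by linear_combination hpa : (1:F) = 0)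
  have h51 : ∀ n : ℤ, n ≠ b → n ≠ a - b → f (2*n) = -1 := by
    intro n hnb hnab
    have hl : a - b - n ≠ 0 := by omega
    have h := hE (a - b - n) b n (Ne.symm hnb)
    rw [show (2*(a-b-n)+2*b+2*n) = 2*a by ring] at h
    rw [hq _ hl, hpb, hpa] at h
    linear_combination h
  have hp0 : f (2*(0:ℤ)) = -1 := h51 0 (Ne.symm hb) (by omega)
  set r : ℤ := 2*(a.natAbs : ℤ) + 2*(b.natAbs : ℤ) + 1 with hr
  have hmn : b + r ≠ -r := by omega
  have h := hE 0 (b + r) (-r) hmn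
  rw [show (2*(0:ℤ)+2*(b+r)+2*(-r)) = 2*b by ring] at h
  rw [show (2*(0:ℤ)+1) = 1 by norm_num] at h
  rw [h51 (b+r) (by omega) (by omega), h51 (-r) (by omega) (by omega), hpb] at h
  have hq0 : f 1 = 0 := by linear_combination h
  apply h01
  have hf0 : f 0 = -1 := by rw [show (0:ℤ) = 2*(0:ℤ) by ring]; exact hp0
  rw [hf0, hq0]; ring

/-- Contradiction: odd part mixed, even part ≡ 0 away from 0. -/
lemma caseC7 (f : ℤ → F) (hO : OddRB f) (h01 : f 0 + f 1 + 1 ≠ 0)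
    (hp : ∀ k : ℤ, k ≠ 0 → f (2*k) = 0)
    (c d : ℤ) (hc : c ≠ 0) (hd : d ≠ 0) (hqc : f (2*c+1) = -1) (hqd : f (2*d+1) = 0) : False := by
  have hcd : c ≠ d := by
    intro h; rw [h, hqd] at hqc; exact one_ne_zero (by linear_combination hqc : (1:F) = 0)
  have h71 : ∀ l : ℤ, l ≠ d → l ≠ c - d → f (2*l+1) = -1 := by
    intro l hld hlcd
    have hn : c - d - l ≠ 0 := by omega
    have h := hO l d (c - d - l) hld
    rw [show (2*l+2*d+2*(c-d-l)+1) = 2*c+1 by ring] at h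
    rw [hqd, hqc, hp _ hn] at h
    linear_combination h
  set r : ℤ := 2*(c.natAbs : ℤ) + 2*(d.natAbs : ℤ) + 1 with hr
  have hlm : d + r ≠ -r := by omega
  have h := hO (d + r) (-r) 0 hlm
  rw [show (2*(d+r)+2*(-r)+2*0+1) = 2*d+1 by ring] at h
  rw [show (2*(0:ℤ)) = 0 by norm_num] at h
  rw [h71 (d+r) (by omega) (by omega), h71 (-r) (by omega) (by omega), hqd] at h
  have hp0 : f 0 = 0 := by linear_combination h
  apply h01
  have hf1 : f 1 = -1 := by
    have := h71 0 (Ne.symm hd) (by omega)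
    rw [show (2*(0:ℤ)+1) = 1 by norm_num] at this
    exact this
  rw [hf1, hp0]; ring

end Aux2
section Aux3

/-- From a "pair covering" hypothesis, extract an injective sequence of nonzero
elements of `S`. -/
lemma pairsSeq (S : Set ℤ) (t : ℤ)
    (h : ∀ m n : ℤ, m ≠ n → m + n = t → m ∈ S ∨ n ∈ S) :
    ∃ g : ℕ → ℤ, Function.Injective g ∧ ∀ k, g k ∈ S ∧ g k ≠ 0 := by
  classical
  refine ⟨fun k => if ((t.natAbs : ℤ) + 1 + k) ∈ S then (t.natAbs : ℤ) + 1 + k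
    else t - ((t.natAbs : ℤ) + 1 + k), ?_, ?_⟩
  · intro j k hjk
    by_cases h1 : ((t.natAbs : ℤ) + 1 + j) ∈ S <;>
      by_cases h2 : ((t.natAbs : ℤ) + 1 + k) ∈ S <;>
        simp only [h1, h2, if_true, if_false, if_pos, if_neg, not_false_iff] at hjk <;>
          omega
  · intro k
    by_cases h1 : ((t.natAbs : ℤ) + 1 + k) ∈ S
    · simp only [if_pos h1]
      exact ⟨h1, by omega⟩
    · simp only [if_neg h1]
      refine ⟨?_, by omega⟩
      rcases h ((t.natAbs : ℤ) + 1 + k) (t - ((t.natAbs : ℤ) + 1 + k)) (by omega) (by ring) with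
        hh | hh
      · exact absurd hh h1
      · exact hh

end Aux3
section Aux4
variable {F : Type*} [Field F]

lemma bwd1 (f : ℤ → F) (h : ∀ m : ℤ, f m = 0) : OddRB f ∧ EvenRB f := by
  constructor <;> intro l m n _ <;> simp only [h] <;> ring

lemma bwd2 (f : ℤ → F) (h : ∀ m : ℤ, f m = -1) : OddRB f ∧ EvenRB f := by
  constructor <;> intro l m n _ <;> simp only [h] <;> ring

lemma bwd3 (f : ℤ → F) (H : ∀ m : ℤ, m ≠ 0 → f (2*m) = 0 ∧ f (2*m+1) = -1)
    (hc : f 0 * (f 1 + 1) = 0) : OddRB f ∧ EvenRB f := by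
  rcases mul_eq_zero.mp hc with hf0 | hf1
  · -- all even values are 0
    have hp : ∀ k : ℤ, f (2*k) = 0 := by
      intro k
      by_cases hk : k = 0
      · rw [hk]; rw [show (2*(0:ℤ)) = 0 by norm_num]; exact hf0
      · exact (H k hk).1
    constructor
    · intro l m n hlm
      rw [hp n, show (2*l+2*m+2*n+1) = 2*(l+m+n)+1 by ring]
      by_cases hl : l = 0
      · have hm : m ≠ 0 := by omega
        rw [(H m hm).2]; ring
      · rw [(H l hl).2]; ring
    · intro l m n _
      rw [hp m, hp n, show (2*l+2*m+2*n) = 2*(l+m+n) by ring, hp (l+m+n)]; ring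
  · -- all odd values are -1
    have hf1' : f 1 = -1 := by linear_combination hf1
    have hq : ∀ k : ℤ, f (2*k+1) = -1 := by
      intro k
      by_cases hk : k = 0
      · rw [hk]; rw [show (2*(0:ℤ)+1) = 1 by norm_num]; exact hf1'
      · exact (H k hk).2
    constructor
    · intro l m n _
      rw [hq l, hq m, show (2*l+2*m+2*n+1) = 2*(l+m+n)+1 by ring, hq (l+m+n)]; ring
    · intro l m n hmn
      rw [hq l]
      by_cases hm : m = 0
      · have hn : n ≠ 0 := by omega
        rw [(H n hn).1]; ring
      · rw [(H m hm).1]; ring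

lemma bwd4 (f : ℤ → F) (H : ∀ m : ℤ, m ≠ 0 → f (2*m) = -1 ∧ f (2*m+1) = 0)
    (hc : f 1 * (f 0 + 1) = 0) : OddRB f ∧ EvenRB f := by
  rcases mul_eq_zero.mp hc with hf1 | hf0
  · -- all odd values are 0
    have hq : ∀ k : ℤ, f (2*k+1) = 0 := by
      intro k
      by_cases hk : k = 0
      · rw [hk]; rw [show (2*(0:ℤ)+1) = 1 by norm_num]; exact hf1
      · exact (H k hk).2
    constructor
    · intro l m n _
      rw [hq l, hq m, show (2*l+2*m+2*n+1) = 2*(l+m+n)+1 by ring, hq (l+m+n)]; ring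
    · intro l m n hmn
      rw [hq l]
      by_cases hm : m = 0
      · have hn : n ≠ 0 := by omega
        rw [(H n hn).1]; ring
      · rw [(H m hm).1]; ring
  · -- all even values are -1
    have hf0' : f 0 = -1 := by linear_combination hf0
    have hp : ∀ k : ℤ, f (2*k) = -1 := by
      intro k
      by_cases hk : k = 0
      · rw [hk]; rw [show (2*(0:ℤ)) = 0 by norm_num]; exact hf0'
      · exact (H k hk).1
    constructor
    · intro l m n hlm
      rw [hp n, show (2*l+2*m+2*n+1) = 2*(l+m+n)+1 by ring]
      by_cases hl : l = 0
      · have hm : m ≠ 0 := by omega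
        rw [(H m hm).2]; ring
      · rw [(H l hl).2]; ring
    · intro l m n _
      rw [hp m, hp n, show (2*l+2*m+2*n) = 2*(l+m+n) by ring, hp (l+m+n)]; ring

end Aux4
section Aux5
variable {F : Type*} [Field F]

lemma triP (f : ℤ → F) (hval : ∀ k : ℤ, k ≠ 0 → f (2*k) = 0 ∨ f (2*k) = -1) :
    (∀ k : ℤ, k ≠ 0 → f (2*k) = 0) ∨ (∀ k : ℤ, k ≠ 0 → f (2*k) = -1) ∨
    (∃ a b : ℤ, a ≠ 0 ∧ b ≠ 0 ∧ f (2*a) = -1 ∧ f (2*b) = 0) := by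
  by_cases h1 : ∀ k : ℤ, k ≠ 0 → f (2*k) = 0
  · exact Or.inl h1
  by_cases h2 : ∀ k : ℤ, k ≠ 0 → f (2*k) = -1
  · exact Or.inr (Or.inl h2)
  push_neg at h1 h2
  obtain ⟨a, ha, hfa⟩ := h1
  obtain ⟨b, hb, hfb⟩ := h2
  exact Or.inr (Or.inr ⟨a, b, ha, hb, (hval a ha).resolve_left hfa,
    (hval b hb).resolve_right hfb⟩)

lemma triQ (f : ℤ → F) (hval : ∀ k : ℤ, k ≠ 0 → f (2*k+1) = 0 ∨ f (2*k+1) = -1) :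
    (∀ k : ℤ, k ≠ 0 → f (2*k+1) = 0) ∨ (∀ k : ℤ, k ≠ 0 → f (2*k+1) = -1) ∨
    (∃ a b : ℤ, a ≠ 0 ∧ b ≠ 0 ∧ f (2*a+1) = -1 ∧ f (2*b+1) = 0) := by
  by_cases h1 : ∀ k : ℤ, k ≠ 0 → f (2*k+1) = 0
  · exact Or.inl h1
  by_cases h2 : ∀ k : ℤ, k ≠ 0 → f (2*k+1) = -1
  · exact Or.inr (Or.inl h2)
  push_neg at h1 h2
  obtain ⟨a, ha, hfa⟩ := h1
  obtain ⟨b, hb, hfb⟩ := h2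
  exact Or.inr (Or.inr ⟨a, b, ha, hb, (hval a ha).resolve_left hfa,
    (hval b hb).resolve_right hfb⟩)

end Aux5

theorem statement3 (F : Type*) [Field F] [CharZero F] (f : ℤ → F)
    (h01 : f 0 + f 1 + 1 ≠ 0)
    (hfin : (W1 f).Finite ∨ (W2 f).Finite ∨ (U1 f).Finite ∨ (U2 f).Finite) :
    (OddRB f ∧ EvenRB f) ↔
      ((∀ m : ℤ, f m = 0) ∨
       (∀ m : ℤ, f m = -1) ∨
       ((∀ m : ℤ, m ≠ 0 → f (2*m) = 0 ∧ f (2*m+1) = -1) ∧ f 0 * (f 1 + 1) = 0) ∨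
       ((∀ m : ℤ, m ≠ 0 → f (2*m) = -1 ∧ f (2*m+1) = 0) ∧ f 1 * (f 0 + 1) = 0)) := by
  constructor
  · rintro ⟨hO, hE⟩
    have hvp : ∀ k : ℤ, k ≠ 0 → f (2*k) = 0 ∨ f (2*k) = -1 := fun k hk => valP f hE h01 k hk
    have hvq : ∀ k : ℤ, k ≠ 0 → f (2*k+1) = 0 ∨ f (2*k+1) = -1 :=
      fun k hk => valQ f hO h01 k hk
    rcases triP f hvp with hP0 | hPm | ⟨a, b, ha, hb, hpa, hpb⟩
    · rcases triQ f hvq with hQ0 | hQm | ⟨c, d, hc, hd, hqc, hqd⟩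
      · -- Case (p ≡ 0, q ≡ 0) : f ≡ 0
        left
        have hp00 : f 0 = 0 := by
          have h := hE 3 (-1) (-2) (by norm_num)
          rw [show (2*(3:ℤ)+2*(-1)+2*(-2)) = 0 by norm_num] at h
          rw [hQ0 3 (by norm_num), hP0 (-1) (by norm_num), hP0 (-2) (by norm_num)] at h
          linear_combination - h
        have hq00 : f 1 = 0 := by
          have h := hO 3 (-1) (-2) (by norm_num)
          rw [show (2*(3:ℤ)+2*(-1)+2*(-2)+1) = 1 by norm_num] at h
          rw [hQ0 3 (by norm_num), hQ0 (-1) (by norm_num), hP0 (-2) (by norm_num)] at h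
          linear_combination - h
        intro m
        rcases Int.even_or_odd m with ⟨k, hk⟩ | ⟨k, hk⟩
        · rw [show m = 2*k by omega]
          by_cases hk0 : k = 0
          · rw [hk0, show (2*(0:ℤ)) = 0 by norm_num]; exact hp00
          · exact hP0 k hk0
        · rw [show m = 2*k+1 by omega]
          by_cases hk0 : k = 0
          · rw [hk0, show (2*(0:ℤ)+1) = 1 by norm_num]; exact hq00
          · exact hQ0 k hk0
      · -- Case (p ≡ 0, q ≡ -1) : alternative 3
        right; right; left
        refine ⟨fun m hm => ⟨hP0 m hm, hQm m hm⟩, ?_⟩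
        have h := hE 0 1 (-1) (by norm_num)
        rw [show (2*(0:ℤ)+2*1+2*(-1)) = 0 by norm_num,
          show (2*(0:ℤ)+1) = 1 by norm_num] at h
        rw [hP0 1 one_ne_zero, hP0 (-1) (by norm_num)] at h
        linear_combination - h
      · -- Case (p ≡ 0, q mixed) : contradiction
        exact (caseC7 f hO h01 hP0 c d hc hd hqc hqd).elim
    · rcases triQ f hvq with hQ0 | hQm | ⟨c, d, hc, hd, hqc, hqd⟩
      · -- Case (p ≡ -1, q ≡ 0) : alternative 4
        right; right; right
        refine ⟨fun m hm => ⟨hPm m hm, hQ0 m hm⟩, ?_⟩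
        have h := hO 1 (-1) 0 (by norm_num)
        rw [show (2*(1:ℤ)+2*(-1)+2*0+1) = 1 by norm_num,
          show (2*(0:ℤ)) = 0 by norm_num] at h
        rw [hQ0 1 one_ne_zero, hQ0 (-1) (by norm_num)] at h
        linear_combination - h
      · -- Case (p ≡ -1, q ≡ -1) : f ≡ -1
        right; left
        have hp00 : f 0 = -1 := by
          have h := hE 3 (-1) (-2) (by norm_num)
          rw [show (2*(3:ℤ)+2*(-1)+2*(-2)) = 0 by norm_num] at h
          rw [hQm 3 (by norm_num), hPm (-1) (by norm_num), hPm (-2) (by norm_num)] at h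
          linear_combination - h
        have hq00 : f 1 = -1 := by
          have h := hO 3 (-1) (-2) (by norm_num)
          rw [show (2*(3:ℤ)+2*(-1)+2*(-2)+1) = 1 by norm_num] at h
          rw [hQm 3 (by norm_num), hQm (-1) (by norm_num), hPm (-2) (by norm_num)] at h
          linear_combination - h
        intro m
        rcases Int.even_or_odd m with ⟨k, hk⟩ | ⟨k, hk⟩
        · rw [show m = 2*k by omega]
          by_cases hk0 : k = 0
          · rw [hk0, show (2*(0:ℤ)) = 0 by norm_num]; exact hp00
          · exact hPm k hk0
        · rw [show m = 2*k+1 by omega]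
          by_cases hk0 : k = 0
          · rw [hk0, show (2*(0:ℤ)+1) = 1 by norm_num]; exact hq00
          · exact hQm k hk0
      · -- Case (p ≡ -1, q mixed) : contradiction via negation symmetry
        have h01' : (-1 - f 0) + (-1 - f 1) + 1 ≠ 0 := fun hh => h01 (by linear_combination - hh)
        have hp' : ∀ k : ℤ, k ≠ 0 → -1 - f (2*k) = 0 := fun k hk => by rw [hPm k hk]; ring
        have hqc' : -1 - f (2*d+1) = -1 := by rw [hqd]; ring
        have hqd' : -1 - f (2*c+1) = 0 := by rw [hqc]; ring
        exact (caseC7 (fun x => -1 - f x) (negOddRB f _ (fun _ => rfl) hO) h01' hp'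
          d c hd hc hqc' hqd').elim
    · rcases triQ f hvq with hQ0 | hQm | ⟨c, d, hc, hd, hqc, hqd⟩
      · -- Case (p mixed, q ≡ 0) : contradiction
        exact (caseC5 f hE h01 hQ0 a b ha hb hpa hpb).elim
      · -- Case (p mixed, q ≡ -1) : contradiction via negation symmetry
        have h01' : (-1 - f 0) + (-1 - f 1) + 1 ≠ 0 := fun hh => h01 (by linear_combination - hh)
        have hq' : ∀ k : ℤ, k ≠ 0 → -1 - f (2*k+1) = 0 := fun k hk => by rw [hQm k hk]; ring
        have hpa' : -1 - f (2*b) = -1 := by rw [hpb]; ring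
        have hpb' : -1 - f (2*a) = 0 := by rw [hpa]; ring
        exact (caseC5 (fun x => -1 - f x) (negEvenRB f _ (fun _ => rfl) hE) h01' hq'
          b a hb ha hpa' hpb').elim
      · -- Case (p mixed, q mixed) : contradiction with finiteness
        exfalso
        have t1 : ∀ m n : ℤ, m ≠ n → m + n = a - d → f (2*m) = -1 ∨ f (2*n) = -1 := by
          intro m n hmn hsum
          have h := hE d m n hmn
          rw [show (2*d+2*m+2*n) = 2*a by omega] at h
          rw [hqd, hpa] at h
          have key : (f (2*m) + 1) * (f (2*n) + 1) = 0 := by linear_combination h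
          rcases mul_eq_zero.mp key with hh | hh
          · left; linear_combination hh
          · right; linear_combination hh
        have t2 : ∀ m n : ℤ, m ≠ n → m + n = b - c → f (2*m) = 0 ∨ f (2*n) = 0 := by
          intro m n hmn hsum
          have h := hE c m n hmn
          rw [show (2*c+2*m+2*n) = 2*b by omega] at h
          rw [hqc, hpb] at h
          have key : f (2*m) * f (2*n) = 0 := by linear_combination - h
          exact mul_eq_zero.mp key
        have t3 : ∀ l m : ℤ, l ≠ m → l + m = c - b → f (2*l+1) = -1 ∨ f (2*m+1) = -1 := by
          intro l m hlm hsum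
          have h := hO l m b hlm
          rw [show (2*l+2*m+2*b+1) = 2*c+1 by omega] at h
          rw [hpb, hqc] at h
          have key : (f (2*l+1) + 1) * (f (2*m+1) + 1) = 0 := by linear_combination h
          rcases mul_eq_zero.mp key with hh | hh
          · left; linear_combination hh
          · right; linear_combination hh
        have t4 : ∀ l m : ℤ, l ≠ m → l + m = d - a → f (2*l+1) = 0 ∨ f (2*m+1) = 0 := by
          intro l m hlm hsum
          have h := hO l m a hlm
          rw [show (2*l+2*m+2*a+1) = 2*d+1 by omega] at h
          rw [hpa, hqd] at h
          have key : f (2*l+1) * f (2*m+1) = 0 := by linear_combination - h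
          exact mul_eq_zero.mp key
        rcases hfin with hfW | hfW | hfW | hfW
        · obtain ⟨g, hginj, hgmem⟩ := pairsSeq {x : ℤ | f (2*x) = -1} (a - d)
            (fun m n hmn hs => t1 m n hmn hs)
          refine Set.not_infinite.mpr hfW
            (Set.infinite_of_injective_forall_mem (f := fun k : ℕ => 2 * g k) ?_ ?_)
          · intro j k hjk
            have hjk' : 2 * g j = 2 * g k := hjk
            exact hginj (by omega)
          · intro k
            exact ⟨g k, (hgmem k).2, by rw [(hgmem k).1]; exact neg_ne_zero.mpr one_ne_zero, rfl⟩
        · obtain ⟨g, hginj, hgmem⟩ := pairsSeq {x : ℤ | f (2*x) = 0} (b - c)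
            (fun m n hmn hs => t2 m n hmn hs)
          refine Set.not_infinite.mpr hfW
            (Set.infinite_of_injective_forall_mem (f := fun k : ℕ => 2 * g k) ?_ ?_)
          · intro j k hjk
            have hjk' : 2 * g j = 2 * g k := hjk
            exact hginj (by omega)
          · intro k
            exact ⟨g k, (hgmem k).2, (hgmem k).1, rfl⟩
        · obtain ⟨g, hginj, hgmem⟩ := pairsSeq {x : ℤ | f (2*x+1) = -1} (c - b)
            (fun m n hmn hs => t3 m n hmn hs)
          refine Set.not_infinite.mpr hfW
            (Set.infinite_of_injective_forall_mem (f := fun k : ℕ => 2 * g k + 1) ?_ ?_)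
          · intro j k hjk
            have hjk' : 2 * g j + 1 = 2 * g k + 1 := hjk
            exact hginj (by omega)
          · intro k
            exact ⟨g k, (hgmem k).2, by rw [(hgmem k).1]; exact neg_ne_zero.mpr one_ne_zero, rfl⟩
        · obtain ⟨g, hginj, hgmem⟩ := pairsSeq {x : ℤ | f (2*x+1) = 0} (d - a)
            (fun m n hmn hs => t4 m n hmn hs)
          refine Set.not_infinite.mpr hfW
            (Set.infinite_of_injective_forall_mem (f := fun k : ℕ => 2 * g k + 1) ?_ ?_)
          · intro j k hjk
            have hjk' : 2 * g j + 1 = 2 * g k + 1 := hjk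
            exact hginj (by omega)
          · intro k
            exact ⟨g k, (hgmem k).2, (hgmem k).1, rfl⟩
  · rintro (h | h | ⟨H, hc⟩ | ⟨H, hc⟩)
    · exact bwd1 f h
    · exact bwd2 f h
    · exact bwd3 f H hc
    · exact bwd4 f H hc
end

section
/- Suppose f satisfies the homogeneous Rota–Baxter equations (odd) and (even), f(0) + f(1) + 1 ≠ 0, the four sets W₁, W₂, U₁, U₂ are all infinite, and W₁ is bounded below; write its two smallest elements as 2m₀ < 2m₁. Then U₁ is bounded below, and its two smallest elements 2l₀+1 < 2l₁+1 satisfy l₀ ≥ −m₁ and l₁ ≥ −m₀. -/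
theorem statement4 (F : Type*) [Field F] [CharZero F] (f : ℤ → F)
    (hodd : OddRB f) (heven : EvenRB f) (h01 : f 0 + f 1 + 1 ≠ 0)
    (hW1 : (W1 f).Infinite) (hW2 : (W2 f).Infinite)
    (hU1 : (U1 f).Infinite) (hU2 : (U2 f).Infinite)
    (hbdd : BddBelow (W1 f)) (m₀ m₁ : ℤ)
    (hm0 : 2*m₀ ∈ W1 f) (hm1 : 2*m₁ ∈ W1 f) (hlt : 2*m₀ < 2*m₁)
    (hmin : ∀ x ∈ W1 f, x = 2*m₀ ∨ 2*m₁ ≤ x) :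
    BddBelow (U1 f) ∧
      ∀ l₀ l₁ : ℤ, 2*l₀+1 ∈ U1 f → 2*l₁+1 ∈ U1 f → 2*l₀+1 < 2*l₁+1 →
        (∀ x ∈ U1 f, x = 2*l₀+1 ∨ 2*l₁+1 ≤ x) →
        -m₁ ≤ l₀ ∧ -m₀ ≤ l₁ := by
  -- basic facts about m₀, m₁
  obtain ⟨m, hm, hfm, hme⟩ := hm0
  have hm0z : m₀ ≠ 0 := by omega
  have hfm0 : f (2*m₀) ≠ 0 := by rw [show m₀ = m by omega]; exact hfm
  obtain ⟨m', hm', hfm', hme'⟩ := hm1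
  have hm1z : m₁ ≠ 0 := by omega
  have hfm1 : f (2*m₁) ≠ 0 := by rw [show m₁ = m' by omega]; exact hfm'
  have hmm : m₀ < m₁ := by omega
  -- index-level minimality for W1
  have hminW : ∀ n : ℤ, n ≠ 0 → f (2*n) ≠ 0 → n = m₀ ∨ m₁ ≤ n := by
    intro n h1 h2
    rcases hmin (2*n) ⟨n, h1, h2, rfl⟩ with h | h
    · left; omega
    · right; omega
  -- closure from the even equation
  have keyE : ∀ l m n : ℤ, m ≠ n → f (2*l+1) ≠ 0 → f (2*m) ≠ 0 → f (2*n) ≠ 0 →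
      f (2*(l+m+n)) ≠ 0 := by
    intro l m n hmn h1 h2 h3 h0
    have he := heven l m n hmn
    rw [show (2*l+2*m+2*n : ℤ) = 2*(l+m+n) by ring, h0, mul_zero] at he
    exact (mul_ne_zero (mul_ne_zero h1 h2) h3) he
  -- closure from the odd equation
  have keyO : ∀ l m n : ℤ, l ≠ m → f (2*l+1) ≠ 0 → f (2*m+1) ≠ 0 → f (2*n) ≠ 0 →
      f (2*(l+m+n)+1) ≠ 0 := by
    intro l m n hlm h1 h2 h3 h0
    have he := hodd l m n hlm
    rw [show (2*l+2*m+2*n+1 : ℤ) = 2*(l+m+n)+1 by ring, h0, mul_zero] at he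
    exact (mul_ne_zero (mul_ne_zero h1 h2) h3) he
  -- even-equation step with W1-minimality
  have stepE : ∀ l m n : ℤ, m ≠ n → f (2*l+1) ≠ 0 → f (2*m) ≠ 0 → f (2*n) ≠ 0 →
      l+m+n = 0 ∨ l+m+n = m₀ ∨ m₁ ≤ l+m+n := by
    intro l m n hmn h1 h2 h3
    rcases eq_or_ne (l+m+n) 0 with h0 | h0
    · exact Or.inl h0
    · exact Or.inr (hminW _ h0 (keyE l m n hmn h1 h2 h3))
  constructor
  · -- U1 is bounded below
    refine ⟨2 * min (-m₀-m₁) (-m₁) + 1, ?_⟩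
    rintro x ⟨l, hl0, hfl, rfl⟩
    have h1 : min (-m₀-m₁) (-m₁) ≤ -m₀-m₁ := min_le_left _ _
    have h2 : min (-m₀-m₁) (-m₁) ≤ -m₁ := min_le_right _ _
    have hs := stepE l m₀ m₁ (by omega) hfl hfm0 hfm1
    omega
  · -- the two smallest elements of U1
    intro l₀ l₁ hl0 hl1 hlt' hminU
    obtain ⟨l, hl, hfl, hle⟩ := hl0
    have hl0z : l₀ ≠ 0 := by omega
    have hfl0 : f (2*l₀+1) ≠ 0 := by rw [show l₀ = l by omega]; exact hfl
    obtain ⟨l', hl', hfl', hle'⟩ := hl1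
    have hl1z : l₁ ≠ 0 := by omega
    have hfl1 : f (2*l₁+1) ≠ 0 := by rw [show l₁ = l' by omega]; exact hfl'
    have hll : l₀ < l₁ := by omega
    have hminU' : ∀ n : ℤ, n ≠ 0 → f (2*n+1) ≠ 0 → n = l₀ ∨ l₁ ≤ n := by
      intro n h1 h2
      rcases hminU (2*n+1) ⟨n, h1, h2, rfl⟩ with h | h
      · left; omega
      · right; omega
    have stepO : ∀ l m n : ℤ, l ≠ m → f (2*l+1) ≠ 0 → f (2*m+1) ≠ 0 → f (2*n) ≠ 0 →
        l+m+n = 0 ∨ l+m+n = l₀ ∨ l₁ ≤ l+m+n := by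
      intro l m n hlm h1 h2 h3
      rcases eq_or_ne (l+m+n) 0 with h0 | h0
      · exact Or.inl h0
      · exact Or.inr (hminU' _ h0 (keyO l m n hlm h1 h2 h3))
    have s1 := stepE l₀ m₀ m₁ (by omega) hfl0 hfm0 hfm1
    have s2 := stepE l₁ m₀ m₁ (by omega) hfl1 hfm0 hfm1
    have s3 := stepO l₀ l₁ m₀ (by omega) hfl0 hfl1 hfm0
    have s4 := stepO l₀ l₁ m₁ (by omega) hfl0 hfl1 hfm1
    omega
end

section
/- Suppose f satisfies the homogeneous Rota–Baxter equations (odd) and (even), f(0) = a with a ≠ 0, and f(0) + f(1) + 1 = 0. Then for all l, m, n ∈ ℤ: (1) if l ≠ m then a·f(2l+1)·f(2m+1) = ((a+1)f(2l+1) + (a+1)f(2m+1) + f(2l+1)f(2m+1) + (a+1))·f(2l+2m+1); (2) if m ≠ 0 then −(a+1)·f(2m+1)·f(2n) = (−a·f(2m+1) − a·f(2n) + f(2m+1)f(2n) − a)·f(2m+2n+1); (3) if m ≠ 0 then a·f(2l+1)·f(2m) = ((a+1)f(2l+1) + (a+1)f(2m) + f(2l+1)f(2m) + (a+1))·f(2l+2m);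 (4) if m ≠ n then −(a+1)·f(2m)·f(2n) = (−a·f(2m) − a·f(2n) + f(2m)f(2n) − a)·f(2m+2n). -/
theorem statement8 (F : Type*) [Field F] [CharZero F] (f : ℤ → F) (a : F)
    (hodd : OddRB f) (heven : EvenRB f)
    (ha : f 0 = a) (ha0 : a ≠ 0) (h01 : f 0 + f 1 + 1 = 0) :
    (∀ l m : ℤ, l ≠ m →
      a * f (2*l+1) * f (2*m+1) =
        ((a+1) * f (2*l+1) + (a+1) * f (2*m+1) + f (2*l+1) * f (2*m+1) + (a+1)) *
          f (2*l+2*m+1)) ∧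
    (∀ m n : ℤ, m ≠ 0 →
      -(a+1) * f (2*m+1) * f (2*n) =
        (-(a * f (2*m+1)) - a * f (2*n) + f (2*m+1) * f (2*n) - a) * f (2*m+2*n+1)) ∧
    (∀ l m : ℤ, m ≠ 0 →
      a * f (2*l+1) * f (2*m) =
        ((a+1) * f (2*l+1) + (a+1) * f (2*m) + f (2*l+1) * f (2*m) + (a+1)) *
          f (2*l+2*m)) ∧
    (∀ m n : ℤ, m ≠ n →
      -(a+1) * f (2*m) * f (2*n) =
        (-(a * f (2*m)) - a * f (2*n) + f (2*m) * f (2*n) - a) * f (2*m+2*n)) := by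
  have hf1 : f 1 = -(a+1) := by linear_combination h01 - ha
  refine ⟨?_, ?_, ?_, ?_⟩
  · intro l m hlm
    have h := hodd l m 0 hlm
    simp only [mul_zero, add_zero] at h
    rw [ha] at h
    linear_combination h
  · intro m n hm
    have h := hodd 0 m n hm.symm
    simp only [mul_zero, zero_add] at h
    rw [hf1] at h
    linear_combination h
  · intro l m hm
    have h := heven l m 0 hm
    simp only [mul_zero, add_zero] at h
    rw [ha] at h
    linear_combination h
  · intro m n hmn
    have h := heven 0 m n hmn
    simp only [mul_zero, zero_add] at h
    rw [hf1] at h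
    linear_combination h
end

section
/- Suppose f satisfies the homogeneous Rota–Baxter equations (odd) and (even), f(0) = a with a ≠ 0, f(0) + f(1) + 1 = 0, and m₀ is a nonzero integer such that for every nonzero m ∈ ℤ: f(2m) ≠ 0 if and only if m₀ divides m, and f(2m+1) ≠ 0 if and only if m₀ divides m. Then for every nonzero k ∈ ℤ: f(2m₀k) ≠ −1, f(2m₀k+1) ≠ 0, f(2m₀k+1) ≠ −1, and 1/f(2m₀k) + 1/f(−2m₀k) + 1/(f(2m₀k)·f(−2m₀k)) = (1+2a)/a². -/
theorem statement13 (F : Type*) [Field F] [CharZero F] (f : ℤ → F) (a : F)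
    (hodd : OddRB f) (heven : EvenRB f)
    (ha : f 0 = a) (ha0 : a ≠ 0) (h01 : f 0 + f 1 + 1 = 0)
    (m₀ : ℤ) (hm₀ : m₀ ≠ 0)
    (hsupp : ∀ m : ℤ, m ≠ 0 → ((f (2*m) ≠ 0 ↔ m₀ ∣ m) ∧ (f (2*m+1) ≠ 0 ↔ m₀ ∣ m))) :
    ∀ k : ℤ, k ≠ 0 →
      f (2*m₀*k) ≠ -1 ∧ f (2*m₀*k+1) ≠ 0 ∧ f (2*m₀*k+1) ≠ -1 ∧
      1 / f (2*m₀*k) + 1 / f (-(2*m₀*k)) + 1 / (f (2*m₀*k) * f (-(2*m₀*k))) =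
        (1 + 2*a) / a^2 := by
  intro k hk
  set M := m₀ * k with hM
  have hMne : M ≠ 0 := mul_ne_zero hm₀ hk
  have hMne' : (-M : ℤ) ≠ 0 := neg_ne_zero.2 hMne
  have hdM : m₀ ∣ M := ⟨k, rfl⟩
  have hdM' : m₀ ∣ -M := (dvd_neg).2 hdM
  have hu : f (2*M) ≠ 0 := ((hsupp M hMne).1).2 hdM
  have hx : f (2*M+1) ≠ 0 := ((hsupp M hMne).2).2 hdM
  have hv : f (2*(-M)) ≠ 0 := ((hsupp (-M) hMne').1).2 hdM'
  have hy : f (2*(-M)+1) ≠ 0 := ((hsupp (-M) hMne').2).2 hdM'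
  have hf1 : f 1 = -1 - a := by linear_combination h01 - ha
  have hne : M ≠ -M := by omega
  -- Step A : a ≠ -1
  have hA : (1 : F) + a ≠ 0 := by
    intro h
    have e := hodd M (-M) 0 hne
    rw [show (2*M+2*(-M)+2*0+1 : ℤ) = 1 by ring, show (2*(0:ℤ)) = 0 by ring,
      ha, hf1] at e
    have : f (2*M+1) * f (2*(-M)+1) = 0 := by
      have ha1 : a = -1 := by linear_combination h
      rw [ha1] at e
      linear_combination -e
    exact (mul_ne_zero hx hy) this
  -- Key relation
  have eb := heven 0 M (-M) hne
  rw [show (2*(0:ℤ)+1) = 1 by ring, show (2*(0:ℤ)+2*M+2*(-M)) = 0 by ring,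
    ha, hf1] at eb
  have rel : a^2 * (f (2*M) + f (2*(-M)) + 1) = (1 + 2*a) * (f (2*M) * f (2*(-M))) := by
    linear_combination eb
  -- u ≠ -1
  have hune : f (2*M) ≠ -1 := by
    intro h
    have h2 : (1+a)^2 * f (2*(-M)) = 0 := by
      linear_combination rel + ((1+2*a)*f (2*(-M)) - a^2) * h
    exact mul_ne_zero (pow_ne_zero 2 hA) hv h2
  -- x ≠ -1
  have hxne : f (2*M+1) ≠ -1 := by
    intro h
    have ec := heven M (-M) 0 hMne'
    rw [show (2*M+2*(-M)+2*0 : ℤ) = 0 by ring, show (2*(0:ℤ)) = 0 by ring, ha, h] at ec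
    have h2 : f (2*(-M)) * (a * (1+a)) = 0 := by linear_combination -ec
    exact mul_ne_zero hv (mul_ne_zero ha0 hA) h2
  have hneg : (2*(-M) : ℤ) = -(2*M) := by ring
  rw [hneg] at hv rel
  rw [show (2*m₀*k : ℤ) = 2*M from by rw [hM]; ring]
  refine ⟨hune, hx, hxne, ?_⟩
  field_simp
  linear_combination rel
end

section
/- Suppose f satisfies the homogeneous Rota–Baxter equations (odd) and (even), f(0) = a with a ≠ 0, f(0) + f(1) + 1 = 0, and m₀ is a nonzero integer such that for every nonzero m ∈ ℤ: f(2m) ≠ 0 if and only if m₀ divides m, and f(2m+1) ≠ 0 if and only if m₀ divides m. Then for all k₁, k₂, k₃ ∈ ℤ with k₂ ≠ k₃: 1/f(2m₀k₁) + 1/(f(2m₀k₁)·f(2m₀(−k₁+k₂+k₃))) + 1/f(2m₀(−k₁+k₂+k₃)) = 1/f(2m₀k₂) + 1/(f(2m₀k₃)·f(2m₀k₂)) + 1/f(2m₀k₃) (all the values f(2m₀k) occurring here are nonzero). -/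
def MulOffDiagonal {M : Type*} [Mul M] (β : M) (G : ℤ → M) : Prop :=
  ∀ k k' : ℤ, k ≠ k' → β * (G k * G k') = G (1 + k + k')

namespace MulOffDiagonal

variable {M : Type*} [CommMonoidWithZero M] {G : ℤ → M} {β : M}

theorem eq_zero_of_ne (hG : MulOffDiagonal β G)
    {t : ℤ} (ht : G t = 0) {u : ℤ} (hu : u ≠ 1 + 2 * t) : G u = 0 := by
  have h := hG t (u - 1 - t) (by omega)
  rwa [ht, zero_mul, mul_zero, show 1 + t + (u - 1 - t) = u by ring, eq_comm] at h

theorem eq_zero (hG : MulOffDiagonal β G)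
    {t : ℤ} (ht : G t = 0) (u : ℤ) : G u = 0 := by
  by_cases hu : u = 1 + 2 * t
  · -- `t + 1` or `t - 1` is another zero of `G`, whose exceptional point differs from `u`
    by_cases ht0 : t = 0
    · exact hG.eq_zero_of_ne (hG.eq_zero_of_ne ht (u := t - 1) (by omega)) (by omega)
    · exact hG.eq_zero_of_ne (hG.eq_zero_of_ne ht (u := t + 1) (by omega)) (by omega)
  · exact hG.eq_zero_of_ne ht hu

theorem one_eq_zero_of_coeff_eq_zero (hG : MulOffDiagonal β G)
    (hβ : β = 0) : G 1 = 0 := by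
  simpa [hβ, eq_comm] using hG (-1) 1 (by norm_num)

theorem mul_eq_mul_of_ne [IsCancelMulZero M] (hG : MulOffDiagonal β G)
    (hβ : β ≠ 0) {p q r s : ℤ} (hpq : p ≠ q) (hrs : r ≠ s)
    (hsum : p + q = r + s) : G p * G q = G r * G s :=
  mul_left_cancel₀ hβ <| by rw [hG p q hpq, hG r s hrs, show 1 + p + q = 1 + r + s by omega]

theorem mul_self_eq_mul [IsCancelMulZero M] (hG : MulOffDiagonal β G)
    (hβ : β ≠ 0) (hG0 : ∀ n, G n ≠ 0) (k : ℤ) {c : ℤ} (hc : c ≠ 0) :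
    G k * G k = G (k - c) * G (k + c) := by
  have h₁ : G k * G (k + c) = G (k - c) * G (k + 2 * c) :=
    hG.mul_eq_mul_of_ne hβ (by omega) (by omega) (by ring)
  have h₂ : G k * G (k - c) = G (k + c) * G (k - 2 * c) :=
    hG.mul_eq_mul_of_ne hβ (by omega) (by omega) (by ring)
  have h₃ : G (k + 2 * c) * G (k - 2 * c) = G (k - c) * G (k + c) :=
    hG.mul_eq_mul_of_ne hβ (by omega) (by omega) (by ring)
  refine mul_right_cancel₀ (mul_ne_zero (hG0 (k - c)) (hG0 (k + c))) ?_
  calc G k * G k * (G (k - c) * G (k + c)) = (G k * G (k + c)) * (G k * G (k - c)) := by ac_rfl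
    _ = G (k - c) * G (k + c) * (G (k + 2 * c) * G (k - 2 * c)) := by rw [h₁, h₂]; ac_rfl
    _ = G (k - c) * G (k + c) * (G (k - c) * G (k + c)) := by rw [h₃]

theorem mul_eq_mul [IsCancelMulZero M] (hG : MulOffDiagonal β G)
    {k k' j j' : ℤ} (hj : j ≠ j') (hsum : k + k' = j + j') :
    G k * G k' = G j * G j' := by
  by_cases hzero : β = 0 ∨ ∃ t, G t = 0
  · have hG0 : ∀ u, G u = 0 := by
      obtain hβ | ⟨t, ht⟩ := hzero
      · exact hG.eq_zero (hG.one_eq_zero_of_coeff_eq_zero hβ)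
      · exact hG.eq_zero ht
    simp [hG0]
  push Not at hzero
  obtain ⟨hβ, hG0⟩ := hzero
  by_cases hk : k = k'
  · subst hk
    obtain ⟨c, rfl, rfl⟩ : ∃ c, j = k - c ∧ j' = k + c := ⟨j' - k, by omega, by omega⟩
    exact hG.mul_self_eq_mul hβ hG0 k (by omega)
  · exact hG.mul_eq_mul_of_ne hβ hk hj hsum

end MulOffDiagonal

theorem EvenRB.one_add_inv_eq_mul {F : Type*} [Field F] {f : ℤ → F} (h : EvenRB f)
    {l m n : ℤ} (hmn : m ≠ n) (hl : f (2*l+1) ≠ 0) (hm : f (2*m) ≠ 0) (hn : f (2*n) ≠ 0)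
    (hs : f (2*l+2*m+2*n) ≠ 0) :
    1 + (f (2*l+2*m+2*n))⁻¹ = (1 + (f (2*l+1))⁻¹) * ((1 + (f (2*m))⁻¹) * (1 + (f (2*n))⁻¹)) := by
  field_simp
  linear_combination h l m n hmn

theorem statement14_general (F : Type*) [Field F] (f : ℤ → F) (a : F)
    (heven : EvenRB f) (ha : f 0 = a) (ha0 : a ≠ 0)
    (m₀ : ℤ) (hm₀ : m₀ ≠ 0)
    (hsupp : ∀ m : ℤ, m ≠ 0 → ((f (2*m) ≠ 0 ↔ m₀ ∣ m) ∧ (f (2*m+1) ≠ 0 ↔ m₀ ∣ m))) :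
    ∀ k₁ k₂ k₃ : ℤ, k₂ ≠ k₃ →
      f (2*m₀*k₁) ≠ 0 ∧ f (2*m₀*k₂) ≠ 0 ∧ f (2*m₀*k₃) ≠ 0 ∧
      f (2*m₀*(-k₁+k₂+k₃)) ≠ 0 ∧
      1 / f (2*m₀*k₁) + 1 / (f (2*m₀*k₁) * f (2*m₀*(-k₁+k₂+k₃))) +
          1 / f (2*m₀*(-k₁+k₂+k₃)) =
        1 / f (2*m₀*k₂) + 1 / (f (2*m₀*k₃) * f (2*m₀*k₂)) + 1 / f (2*m₀*k₃) := by
  have hx : ∀ k : ℤ, f (2*(m₀*k)) ≠ 0 := fun k => by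
    rcases eq_or_ne k 0 with rfl | hk
    · simpa [ha] using ha0
    · exact (hsupp _ (mul_ne_zero hm₀ hk)).1.mpr (dvd_mul_right m₀ k)
  have hG : MulOffDiagonal (1 + (f (2*m₀+1))⁻¹) (fun k => 1 + (f (2*(m₀*k)))⁻¹) := by
    intro k k' hk
    have hs := hx (1+k+k')
    beta_reduce
    rw [show 2*(m₀*(1+k+k')) = 2*m₀+2*(m₀*k)+2*(m₀*k') by ring] at hs ⊢
    exact (heven.one_add_inv_eq_mul (mul_left_cancel₀ hm₀ |>.mt hk)
      ((hsupp m₀ hm₀).2.mpr dvd_rfl) (hx k) (hx k') hs).symm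
  intro k₁ k₂ k₃ hk
  simp only [mul_assoc] at hx ⊢
  refine ⟨hx k₁, hx k₂, hx k₃, hx _, ?_⟩
  have hprod := hG.mul_eq_mul hk (show k₁ + (-k₁+k₂+k₃) = k₂ + k₃ by ring)
  simp only [one_div, mul_inv]
  linear_combination hprod

theorem statement14 (F : Type*) [Field F] [CharZero F] (f : ℤ → F) (a : F)
    (hodd : OddRB f) (heven : EvenRB f)
    (ha : f 0 = a) (ha0 : a ≠ 0) (h01 : f 0 + f 1 + 1 = 0)
    (m₀ : ℤ) (hm₀ : m₀ ≠ 0)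
    (hsupp : ∀ m : ℤ, m ≠ 0 → ((f (2*m) ≠ 0 ↔ m₀ ∣ m) ∧ (f (2*m+1) ≠ 0 ↔ m₀ ∣ m))) :
    ∀ k₁ k₂ k₃ : ℤ, k₂ ≠ k₃ →
      f (2*m₀*k₁) ≠ 0 ∧ f (2*m₀*k₂) ≠ 0 ∧ f (2*m₀*k₃) ≠ 0 ∧
      f (2*m₀*(-k₁+k₂+k₃)) ≠ 0 ∧
      1 / f (2*m₀*k₁) + 1 / (f (2*m₀*k₁) * f (2*m₀*(-k₁+k₂+k₃))) +
          1 / f (2*m₀*(-k₁+k₂+k₃)) =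
        1 / f (2*m₀*k₂) + 1 / (f (2*m₀*k₃) * f (2*m₀*k₂)) + 1 / f (2*m₀*k₃) :=
  statement14_general F f a heven ha ha0 m₀ hm₀ hsupp
end

section
/- Suppose f satisfies the homogeneous Rota–Baxter equations (odd) and (even), f(0) = 0 and f(1) = −1. Then for all l, m, n ∈ ℤ: (1) if l ≠ m then (f(2l+1)+1)·(f(2m+1)+1)·f(2l+2m+1) = 0; (2) if m ≠ 0 then f(2m+1)·f(2n)·(1 + f(2m+2n+1)) = 0; (3) if m ≠ 0 then (f(2l+1)+1)·(f(2m)+1)·f(2l+2m) = 0; (4) if m ≠ n then f(2m)·f(2n)·(1 + f(2m+2n)) = 0. -/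
theorem statement16 (F : Type*) [Field F] [CharZero F] (f : ℤ → F)
    (hodd : OddRB f) (heven : EvenRB f)
    (h0 : f 0 = 0) (h1 : f 1 = -1) :
    (∀ l m : ℤ, l ≠ m → (f (2*l+1) + 1) * (f (2*m+1) + 1) * f (2*l+2*m+1) = 0) ∧
    (∀ m n : ℤ, m ≠ 0 → f (2*m+1) * f (2*n) * (1 + f (2*m+2*n+1)) = 0) ∧
    (∀ l m : ℤ, m ≠ 0 → (f (2*l+1) + 1) * (f (2*m) + 1) * f (2*l+2*m) = 0) ∧
    (∀ m n : ℤ, m ≠ n → f (2*m) * f (2*n) * (1 + f (2*m+2*n)) = 0) := by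
  refine ⟨?_, ?_, ?_, ?_⟩
  · intro l m hlm
    have h := hodd l m 0 hlm
    norm_num [h0] at h
    rw [show 2*l+2*m+1 = 2*l+(2*m+1) by ring] at h ⊢
    rcases h with h | h
    · linear_combination f (2*l+(2*m+1)) * h
    · rw [h, mul_zero]
  · intro m n hm
    have h := hodd 0 m n (by simpa using (Ne.symm hm))
    norm_num [h1] at h
    rw [show 2*m+2*n+1 = 2*m+(2*n+1) by ring] at h ⊢
    linear_combination -h
  · intro l m hm
    have h := heven l m 0 hm
    norm_num [h0] at h
    rcases h with h | h
    · linear_combination f (2*l+2*m) * h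
    · rw [h, mul_zero]
  · intro m n hmn
    have h := heven 0 m n hmn
    norm_num [h1] at h
    linear_combination -h
end

section
/- Suppose f satisfies the homogeneous Rota–Baxter equations (odd) and (even), f(0) = 0 and f(1) = −1. Then: (1) for all nonzero k, l ∈ ℤ with k ≠ l and k ≠ −l, if f(2k) ≠ 0 and f(2l) ≠ 0 then f(2k+2l) = −1; (2) for all nonzero k, m ∈ ℤ, if f(2k) ≠ 0 and f(2m+1) ≠ 0 then f(2k+2m+1) = −1; (3) for all nonzero k, n ∈ ℤ, if f(2k) = 0 and f(2n+1) = 0 then f(2k+2n) = 0; (4) for all nonzero m, n ∈ ℤ with m ≠ n and m ≠ −n, if f(2m+1) = 0 and f(2n+1) = 0 then f(2m+2n+1) = 0; (5) for every nonzero k ∈ ℤ, f(2k)·f(−2k) = 0; (6) for every m ∈ ℤ, (f(2m+1)+1)·(f(−2m+1)+1) = 0; (7) the sets W₂ and U₁ are infinite. -/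
theorem statement17 (F : Type*) [Field F] [CharZero F] (f : ℤ → F)
    (hodd : OddRB f) (heven : EvenRB f)
    (h0 : f 0 = 0) (h1 : f 1 = -1) :
    (∀ k l : ℤ, k ≠ 0 → l ≠ 0 → k ≠ l → k ≠ -l →
      f (2*k) ≠ 0 → f (2*l) ≠ 0 → f (2*k+2*l) = -1) ∧
    (∀ k m : ℤ, k ≠ 0 → m ≠ 0 →
      f (2*k) ≠ 0 → f (2*m+1) ≠ 0 → f (2*k+2*m+1) = -1) ∧
    (∀ k n : ℤ, k ≠ 0 → n ≠ 0 →
      f (2*k) = 0 → f (2*n+1) = 0 → f (2*k+2*n) = 0) ∧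
    (∀ m n : ℤ, m ≠ 0 → n ≠ 0 → m ≠ n → m ≠ -n →
      f (2*m+1) = 0 → f (2*n+1) = 0 → f (2*m+2*n+1) = 0) ∧
    (∀ k : ℤ, k ≠ 0 → f (2*k) * f (-(2*k)) = 0) ∧
    (∀ m : ℤ, (f (2*m+1) + 1) * (f (-(2*m)+1) + 1) = 0) ∧
    ((W2 f).Infinite ∧ (U1 f).Infinite) := by
  classical
  have p1 : ∀ k l : ℤ, k ≠ 0 → l ≠ 0 → k ≠ l → k ≠ -l →
      f (2*k) ≠ 0 → f (2*l) ≠ 0 → f (2*k+2*l) = -1 := by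
    intro k l hk hl hkl hkl' hfk hfl
    have h := heven 0 k l hkl
    rw [show (2:ℤ)*0+2*k+2*l = 2*k+2*l by ring, show (2:ℤ)*0+1 = 1 by ring, h1] at h
    have key : f (2*k) * f (2*l) * (f (2*k+2*l) + 1) = 0 := by linear_combination -h
    have h2 : f (2*k+2*l) + 1 = 0 :=
      (mul_eq_zero.mp key).resolve_left (mul_ne_zero hfk hfl)
    linear_combination h2
  have p2 : ∀ k m : ℤ, k ≠ 0 → m ≠ 0 →
      f (2*k) ≠ 0 → f (2*m+1) ≠ 0 → f (2*k+2*m+1) = -1 := by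
    intro k m hk hm hfk hfm
    have h := hodd 0 m k (Ne.symm hm)
    rw [show (2:ℤ)*0+2*m+2*k+1 = 2*k+2*m+1 by ring, show (2:ℤ)*0+1 = 1 by ring, h1] at h
    have key : f (2*m+1) * f (2*k) * (f (2*k+2*m+1) + 1) = 0 := by linear_combination -h
    have h2 : f (2*k+2*m+1) + 1 = 0 :=
      (mul_eq_zero.mp key).resolve_left (mul_ne_zero hfm hfk)
    linear_combination h2
  have p3 : ∀ k n : ℤ, k ≠ 0 → n ≠ 0 →
      f (2*k) = 0 → f (2*n+1) = 0 → f (2*k+2*n) = 0 := by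
    intro k n hk hn hfk hfn
    have h := heven n k 0 hk
    rw [show (2:ℤ)*n+2*k+2*0 = 2*k+2*n by ring, show (2:ℤ)*0 = 0 by ring,
      h0, hfk, hfn] at h
    linear_combination -h
  have p4 : ∀ m n : ℤ, m ≠ 0 → n ≠ 0 → m ≠ n → m ≠ -n →
      f (2*m+1) = 0 → f (2*n+1) = 0 → f (2*m+2*n+1) = 0 := by
    intro m n hm hn hmn hmn' hfm hfn
    have h := hodd m n 0 hmn
    rw [show (2:ℤ)*m+2*n+2*0+1 = 2*m+2*n+1 by ring, show (2:ℤ)*0 = 0 by ring,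
      h0, hfm, hfn] at h
    linear_combination -h
  have p5 : ∀ k : ℤ, k ≠ 0 → f (2*k) * f (-(2*k)) = 0 := by
    intro k hk
    have h := heven 0 k (-k) (by omega)
    rw [show (2:ℤ)*0+2*k+2*(-k) = 0 by ring, show (2:ℤ)*(-k) = -(2*k) by ring,
      show (2:ℤ)*0+1 = 1 by ring, h0, h1] at h
    linear_combination -h
  have p6 : ∀ m : ℤ, (f (2*m+1) + 1) * (f (-(2*m)+1) + 1) = 0 := by
    intro m
    rcases eq_or_ne m 0 with rfl | hm
    · rw [show (2:ℤ)*0+1 = 1 by ring, show -((2:ℤ)*0)+1 = 1 by ring, h1]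
      ring
    · have h := hodd m (-m) 0 (by omega)
      rw [show (2:ℤ)*m+2*(-m)+2*0+1 = 1 by ring, show (2:ℤ)*(-m)+1 = -(2*m)+1 by ring,
        show (2:ℤ)*0 = 0 by ring, h0, h1] at h
      linear_combination h
  refine ⟨p1, p2, p3, p4, p5, p6, ?_, ?_⟩
  · apply Set.infinite_of_injective_forall_mem
      (f := fun n : ℕ => if f (2*((n:ℤ)+1)) = 0 then 2*((n:ℤ)+1) else -(2*((n:ℤ)+1)))
    case hi =>
      intro a b hab
      simp only at hab
      split_ifs at hab <;> omega
    case hf =>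
      intro n
      split_ifs with hf
      · exact ⟨(n:ℤ)+1, by omega, hf, rfl⟩
      · refine ⟨-((n:ℤ)+1), by omega, ?_, by ring⟩
        have h5 := p5 ((n:ℤ)+1) (by omega)
        rw [show (2:ℤ)*(-((n:ℤ)+1)) = -(2*((n:ℤ)+1)) by ring]
        exact (mul_eq_zero.mp h5).resolve_left hf
  · apply Set.infinite_of_injective_forall_mem
      (f := fun n : ℕ => if f (2*((n:ℤ)+1)+1) ≠ 0 then 2*((n:ℤ)+1)+1 else -(2*((n:ℤ)+1))+1)
    case hi =>
      intro a b hab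
      simp only at hab
      split_ifs at hab <;> omega
    case hf =>
      intro n
      split_ifs with hf
      · exact ⟨(n:ℤ)+1, by omega, hf, rfl⟩
      · refine ⟨-((n:ℤ)+1), by omega, ?_, by ring⟩
        push_neg at hf
        have h6 := p6 ((n:ℤ)+1)
        rw [hf] at h6
        have h7 : f (-(2*((n:ℤ)+1))+1) + 1 = 0 := by linear_combination h6
        rw [show (2:ℤ)*(-((n:ℤ)+1))+1 = -(2*((n:ℤ)+1))+1 by ring]
        intro hz
        rw [hz] at h7
        norm_num at h7
end

section
/- Suppose f(0) = 0, f(1) = −1, and the set W₁ is finite. Then f satisfies the homogeneous Rota–Baxter equations (odd) and (even) if and only if one of the following holds: (1) f(2m) = 0 and f(2m+1) = −1 for all m ∈ ℤ; (2) there exists a nonzero n₀ ∈ ℤ with f(2n₀+1) ≠ 0 and f(2n₀+1) ≠ −1 such that f(2m) = 0 for all m ∈ ℤ and f(2n+1) = −1 for all n ∈ ℤ with n ≠ n₀; (3) there exists a nonzero n₀ ∈ ℤ with f(2n₀+1) = 0 such that f(2m) = 0 for all m ∈ ℤ and f(2n+1) = −1 for all n ∈ ℤ with n ≠ n₀; (4)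 there exists a nonzero m₀ ∈ ℤ with f(2m₀) ≠ 0 such that f(2m) = 0 for all m ∈ ℤ with m ≠ m₀ and f(2n+1) = −1 for all n ∈ ℤ. -/
lemma keyS_aux (S : Set ℤ) (h0S : (0:ℤ) ∉ S)
    (hcl : ∀ s t : ℤ, s ∈ S → t ∈ S → s ≠ t → s + t ∈ S)
    (u v : ℤ) (hu : u ∈ S) (hv : v ∈ S) (huv : u ≠ v) :
    ∃ p q : ℤ, p ≠ 0 ∧ ∀ k : ℕ, q + (k : ℤ) * p ∈ S := by
  have hu0 : u ≠ 0 := fun h => h0S (h ▸ hu)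
  have hv0 : v ≠ 0 := fun h => h0S (h ▸ hv)
  have hw : u + v ∈ S := hcl u v hu hv huv
  have hw0 : u + v ≠ 0 := fun h => h0S (h ▸ hw)
  obtain ⟨p, q, hpS, hqS, hpq, hsg⟩ :
      ∃ p q : ℤ, p ∈ S ∧ q ∈ S ∧ p ≠ q ∧ 0 < p * q := by
    rcases hu0.lt_or_gt with hu1 | hu1 <;> rcases hv0.lt_or_gt with hv1 | hv1
    · exact ⟨u, v, hu, hv, huv, mul_pos_of_neg_of_neg hu1 hv1⟩
    · rcases hw0.lt_or_gt with hw1 | hw1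
      · exact ⟨u, u + v, hu, hw, by omega, mul_pos_of_neg_of_neg hu1 hw1⟩
      · exact ⟨v, u + v, hv, hw, by omega, mul_pos hv1 hw1⟩
    · rcases hw0.lt_or_gt with hw1 | hw1
      · exact ⟨v, u + v, hv, hw, by omega, mul_pos_of_neg_of_neg hv1 hw1⟩
      · exact ⟨u, u + v, hu, hw, by omega, mul_pos hu1 hw1⟩
    · exact ⟨u, v, hu, hv, huv, mul_pos hu1 hv1⟩
  refine ⟨p, q, fun h => h0S (h ▸ hpS), ?_⟩
  intro k
  induction k with
  | zero => simpa using hqS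
  | succ k ih =>
    have hne : p ≠ q + (k : ℤ) * p := by
      intro he
      rcases mul_pos_iff.mp hsg with ⟨hp1, hq1⟩ | ⟨hp1, hq1⟩
      · rcases Nat.eq_zero_or_pos k with hk | hk
        · subst hk; simp at he; exact hpq he
        · have hk1 : (1 : ℤ) ≤ (k : ℤ) := by exact_mod_cast hk
          linarith [mul_le_mul_of_nonneg_right hk1 hp1.le]
      · rcases Nat.eq_zero_or_pos k with hk | hk
        · subst hk; simp at he; exact hpq he
        · have hk1 : (1 : ℤ) ≤ (k : ℤ) := by exact_mod_cast hk
          linarith [mul_le_mul_of_nonpos_right hk1 hp1.le]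
    have hmem := hcl p (q + (k : ℤ) * p) hpS ih hne
    have e : q + ((k : ℤ) + 1) * p = p + (q + (k : ℤ) * p) := by ring
    push_cast
    rw [e]
    exact hmem

lemma Eatmost1 {F : Type*} [Field F] (f : ℤ → F) (h0 : f 0 = 0) (h1 : f 1 = -1)
    (heven : EvenRB f) (hfin : (W1 f).Finite) :
    ∀ m n : ℤ, m ≠ n → m ≠ 0 → n ≠ 0 → f (2*m) ≠ 0 → f (2*n) ≠ 0 → False := by
  intro m n hmn hm0 hn0 hfm hfn
  have hneg : (-1 : F) ≠ 0 := neg_ne_zero.mpr one_ne_zero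
  have L1 : ∀ a b : ℤ, a ≠ b → f (2*a) * f (2*b) * (f (2*a+2*b) + 1) = 0 := by
    intro a b hab
    have h := heven 0 a b hab
    rw [show (2:ℤ)*0+2*a+2*b = 2*a+2*b by ring, show (2:ℤ)*0+1 = 1 by ring, h1] at h
    linear_combination -h
  set S : Set ℤ := {k : ℤ | k ≠ 0 ∧ f (2*k) = -1} with hSdef
  have hval : ∀ a b : ℤ, a ≠ b → f (2*a) ≠ 0 → f (2*b) ≠ 0 → a + b ∈ S := by
    intro a b hab ha hb
    have h := L1 a b hab
    have h3 : f (2*a+2*b) + 1 = 0 := by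
      rcases mul_eq_zero.mp h with h' | h'
      · rcases mul_eq_zero.mp h' with h'' | h''
        · exact absurd h'' ha
        · exact absurd h'' hb
      · exact h'
    have h4 : f (2*(a+b)) = -1 := by
      rw [show 2*(a+b) = 2*a+2*b by ring]; linear_combination h3
    refine ⟨?_, h4⟩
    intro hab0
    rw [hab0, show (2:ℤ)*0 = 0 by ring, h0] at h4
    exact one_ne_zero (α := F) (by linear_combination h4)
  have h0S : (0:ℤ) ∉ S := fun h => h.1 rfl
  have hcl : ∀ s t : ℤ, s ∈ S → t ∈ S → s ≠ t → s + t ∈ S := by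
    intro s t hs ht hst
    exact hval s t hst (by rw [hs.2]; exact hneg) (by rw [ht.2]; exact hneg)
  have hu : m + n ∈ S := hval m n hmn hfm hfn
  have hv : 2*m + n ∈ S := by
    have h := hval (m+n) m (by omega) (by rw [hu.2]; exact hneg) hfm
    rwa [show m + n + m = 2*m + n by ring] at h
  obtain ⟨p, q, hp0, hseq⟩ := keyS_aux S h0S hcl _ _ hu hv (by omega)
  have hinf : (W1 f).Infinite := by
    refine Set.infinite_of_injective_forall_mem
      (f := fun k : ℕ => 2*(q + (k:ℤ)*p)) (s := W1 f) ?_ ?_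
    · intro a b hab
      simp only at hab
      have h2 : (a:ℤ)*p = (b:ℤ)*p := by linarith
      exact_mod_cast mul_right_cancel₀ hp0 h2
    · intro k
      obtain ⟨hk0, hkv⟩ := hseq k
      exact ⟨q + (k:ℤ)*p, hk0, by rw [hkv]; exact hneg, rfl⟩
  exact hinf hfin

lemma Oatmost1 {F : Type*} [Field F] (f : ℤ → F) (h0 : f 0 = 0) (h1 : f 1 = -1)
    (hodd : OddRB f) (hfin : (W1 f).Finite) :
    ∀ l m : ℤ, l ≠ m → l ≠ 0 → m ≠ 0 → f (2*l+1) ≠ -1 → f (2*m+1) ≠ -1 → False := by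
  intro l m hlm hl0 hm0 hal ham
  have hneg : (-1 : F) ≠ 0 := neg_ne_zero.mpr one_ne_zero
  have L3 : ∀ a b : ℤ, a ≠ b →
      (f (2*a+1)+1) * (f (2*b+1)+1) * f (2*a+2*b+1) = 0 := by
    intro a b hab
    have h := hodd a b 0 hab
    rw [show 2*a+2*b+2*0+1 = 2*a+2*b+1 by ring, show (2:ℤ)*0 = 0 by ring, h0] at h
    linear_combination -h
  set T : Set ℤ := {k : ℤ | k ≠ 0 ∧ f (2*k+1) = 0} with hTdef
  have hval : ∀ a b : ℤ, a ≠ b → f (2*a+1) ≠ -1 → f (2*b+1) ≠ -1 → a + b ∈ T := by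
    intro a b hab ha hb
    have h := L3 a b hab
    have h3 : f (2*a+2*b+1) = 0 := by
      rcases mul_eq_zero.mp h with h' | h'
      · rcases mul_eq_zero.mp h' with h'' | h''
        · exact absurd (by linear_combination h'' : f (2*a+1) = -1) ha
        · exact absurd (by linear_combination h'' : f (2*b+1) = -1) hb
      · exact h'
    have h4 : f (2*(a+b)+1) = 0 := by
      rw [show 2*(a+b)+1 = 2*a+2*b+1 by ring]; exact h3
    refine ⟨?_, h4⟩
    intro hab0
    rw [hab0, show (2:ℤ)*0+1 = 1 by ring, h1] at h4
    exact hneg h4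
  have h0T : (0:ℤ) ∉ T := fun h => h.1 rfl
  have hcl : ∀ s t : ℤ, s ∈ T → t ∈ T → s ≠ t → s + t ∈ T := by
    intro s t hs ht hst
    refine hval s t hst ?_ ?_
    · rw [hs.2]; intro h'; exact hneg h'.symm
    · rw [ht.2]; intro h'; exact hneg h'.symm
  have hu : l + m ∈ T := hval l m hlm hal ham
  have hv : 2*l + m ∈ T := by
    have h := hval (l+m) l (by omega) (by rw [hu.2]; intro h'; exact hneg h'.symm) hal
    rwa [show l + m + l = 2*l + m by ring] at h
  obtain ⟨p, q, hp0, hseq⟩ := keyS_aux T h0T hcl _ _ hu hv (by omega)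
  have L5 : ∀ s t n : ℤ, s ≠ t → f (2*s+1) = 0 → f (2*t+1) = 0 →
      (f (2*n) + 1) * f (2*s+2*t+2*n+1) = 0 := by
    intro s t n hst hs ht
    have h := hodd s t n hst
    rw [hs, ht] at h
    linear_combination -h
  have hq : q ∈ T := by simpa using hseq 0
  have hmem : ∀ k : ℕ, (-(2*q + ((k:ℤ)+1)*p) ≠ 0) ∧
      f (2*(-(2*q + ((k:ℤ)+1)*p))) = -1 := by
    intro k
    have ht' := hseq (k+1)
    push_cast at ht'
    obtain ⟨htz, htv⟩ := ht'
    have hst : q ≠ q + ((k:ℤ)+1)*p := by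
      intro he
      have h2 : ((k:ℤ)+1)*p = 0 := by linarith
      rcases mul_eq_zero.mp h2 with h3 | h3
      · omega
      · exact hp0 h3
    have h := L5 q (q + ((k:ℤ)+1)*p) (-(2*q + ((k:ℤ)+1)*p)) hst hq.2 htv
    rw [show 2*q + 2*(q + ((k:ℤ)+1)*p) + 2*(-(2*q + ((k:ℤ)+1)*p)) + 1 = 1 by ring,
      h1] at h
    have hfv : f (2*(-(2*q + ((k:ℤ)+1)*p))) = -1 := by linear_combination -h
    refine ⟨?_, hfv⟩
    intro he
    rw [he, show (2:ℤ)*0 = 0 by ring, h0] at hfv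
    exact hneg hfv.symm
  have hinf : (W1 f).Infinite := by
    refine Set.infinite_of_injective_forall_mem
      (f := fun k : ℕ => 2*(-(2*q + ((k:ℤ)+1)*p))) (s := W1 f) ?_ ?_
    · intro a b hab
      simp only at hab
      have h2 : (a:ℤ)*p = (b:ℤ)*p := by linarith
      exact_mod_cast mul_right_cancel₀ hp0 h2
    · intro k
      exact ⟨-(2*q + ((k:ℤ)+1)*p), (hmem k).1, by rw [(hmem k).2]; exact hneg, rfl⟩
  exact hinf hfin

lemma bwd_odd {F : Type*} [Field F] (f : ℤ → F) (n₀ : ℤ)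
    (hb : ∀ m : ℤ, f (2*m) = 0) (ha : ∀ n : ℤ, n ≠ n₀ → f (2*n+1) = -1) :
    OddRB f ∧ EvenRB f := by
  constructor
  · intro l m n hlm
    rcases eq_or_ne l n₀ with h | h
    · rw [hb n, ha m (fun he => hlm (h.trans he.symm))]; ring
    · rw [hb n, ha l h]; ring
  · intro l m n _
    rw [hb m, hb n, show 2*l+2*m+2*n = 2*(l+m+n) by ring, hb (l+m+n)]; ring

lemma bwd_even {F : Type*} [Field F] (f : ℤ → F) (m₀ : ℤ)
    (hb : ∀ m : ℤ, m ≠ m₀ → f (2*m) = 0) (ha : ∀ n : ℤ, f (2*n+1) = -1) :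
    OddRB f ∧ EvenRB f := by
  constructor
  · intro l m n _
    rw [ha l, ha m, show 2*l+2*m+2*n+1 = 2*(l+m+n)+1 by ring, ha (l+m+n)]; ring
  · intro l m n hmn
    rcases eq_or_ne m m₀ with h | h
    · rw [ha l, hb n (fun he => hmn (h.trans he.symm))]; ring
    · rw [ha l, hb m h]; ring


theorem statement18 (F : Type*) [Field F] [CharZero F] (f : ℤ → F)
    (h0 : f 0 = 0) (h1 : f 1 = -1) (hfin : (W1 f).Finite) :
    (OddRB f ∧ EvenRB f) ↔
      ((∀ m : ℤ, f (2*m) = 0 ∧ f (2*m+1) = -1) ∨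
       (∃ n₀ : ℤ, n₀ ≠ 0 ∧ f (2*n₀+1) ≠ 0 ∧ f (2*n₀+1) ≠ -1 ∧
         (∀ m : ℤ, f (2*m) = 0) ∧ ∀ n : ℤ, n ≠ n₀ → f (2*n+1) = -1) ∨
       (∃ n₀ : ℤ, n₀ ≠ 0 ∧ f (2*n₀+1) = 0 ∧
         (∀ m : ℤ, f (2*m) = 0) ∧ ∀ n : ℤ, n ≠ n₀ → f (2*n+1) = -1) ∨
       (∃ m₀ : ℤ, m₀ ≠ 0 ∧ f (2*m₀) ≠ 0 ∧
         (∀ m : ℤ, m ≠ m₀ → f (2*m) = 0) ∧ ∀ n : ℤ, f (2*n+1) = -1)) := by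
  constructor
  · rintro ⟨hodd, heven⟩
    have EA := Eatmost1 f h0 h1 heven hfin
    have OA := Oatmost1 f h0 h1 hodd hfin
    by_cases hE : ∃ m : ℤ, m ≠ 0 ∧ f (2*m) ≠ 0
    · obtain ⟨m₀, hm₀, hbm₀⟩ := hE
      have hb' : ∀ m : ℤ, m ≠ m₀ → f (2*m) = 0 := by
        intro m hm
        rcases eq_or_ne m 0 with h | h
        · rw [h, show (2:ℤ)*0 = 0 by ring]; exact h0
        · by_contra hne; exact EA m m₀ hm h hm₀ hne hbm₀
      by_cases hO : ∃ n : ℤ, n ≠ 0 ∧ f (2*n+1) ≠ -1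
      · exfalso
        obtain ⟨n₀, hn₀, han₀⟩ := hO
        have ha' : ∀ n : ℤ, n ≠ n₀ → f (2*n+1) = -1 := by
          intro n hn
          rcases eq_or_ne n 0 with h | h
          · rw [h, show (2:ℤ)*0+1 = 1 by ring]; exact h1
          · by_contra hne; exact OA n n₀ hn h hn₀ hne han₀
        rcases eq_or_ne n₀ m₀ with hnm | hnm
        · subst hnm
          have h := heven n₀ n₀ (-n₀) (by omega)
          rw [hb' (-n₀) (by omega),
            show 2*n₀+2*n₀+2*(-n₀) = 2*n₀ by ring] at h
          have hx1 : f (2*n₀+1) + 1 ≠ 0 := fun h' => han₀ (by linear_combination h')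
          have h5 : (f (2*n₀+1) + 1) * ((f (2*n₀) + 1) * f (2*n₀)) = 0 := by
            linear_combination -h
          have h6 : f (2*n₀) = -1 := by
            rcases mul_eq_zero.mp h5 with h' | h'
            · exact absurd h' hx1
            · rcases mul_eq_zero.mp h' with h'' | h''
              · linear_combination h''
              · exact absurd h'' hbm₀
          set L : ℤ := (n₀.natAbs : ℤ) + 1 with hL
          have h7 := hodd L (-L) n₀ (by omega)
          rw [ha' L (by omega), ha' (-L) (by omega), h6,
            show 2*L+2*(-L)+2*n₀+1 = 2*n₀+1 by ring] at h7
          exact han₀ (by linear_combination -h7)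
        · have h := hodd (n₀ - m₀) 0 m₀ (by omega)
          rw [show 2*(n₀-m₀)+2*0+2*m₀+1 = 2*n₀+1 by ring,
            show (2:ℤ)*0+1 = 1 by ring, h1, ha' (n₀-m₀) (by omega)] at h
          have h5 : f (2*m₀) * (f (2*n₀+1) + 1) = 0 := by linear_combination h
          rcases mul_eq_zero.mp h5 with h' | h'
          · exact hbm₀ h'
          · exact han₀ (by linear_combination h')
      · push_neg at hO
        refine Or.inr (Or.inr (Or.inr ⟨m₀, hm₀, hbm₀, hb', ?_⟩))
        intro n
        rcases eq_or_ne n 0 with h | h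
        · rw [h, show (2:ℤ)*0+1 = 1 by ring]; exact h1
        · exact hO n h
    · push_neg at hE
      have hb'' : ∀ m : ℤ, f (2*m) = 0 := by
        intro m
        rcases eq_or_ne m 0 with h | h
        · rw [h, show (2:ℤ)*0 = 0 by ring]; exact h0
        · exact hE m h
      by_cases hO : ∃ n : ℤ, n ≠ 0 ∧ f (2*n+1) ≠ -1
      · obtain ⟨n₀, hn₀, han₀⟩ := hO
        have ha' : ∀ n : ℤ, n ≠ n₀ → f (2*n+1) = -1 := by
          intro n hn
          rcases eq_or_ne n 0 with h | h
          · rw [h, show (2:ℤ)*0+1 = 1 by ring]; exact h1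
          · by_contra hne; exact OA n n₀ hn h hn₀ hne han₀
        rcases eq_or_ne (f (2*n₀+1)) 0 with hz | hz
        · exact Or.inr (Or.inr (Or.inl ⟨n₀, hn₀, hz, hb'', ha'⟩))
        · exact Or.inr (Or.inl ⟨n₀, hn₀, hz, han₀, hb'', ha'⟩)
      · push_neg at hO
        refine Or.inl (fun m => ⟨hb'' m, ?_⟩)
        rcases eq_or_ne m 0 with h | h
        · rw [h, show (2:ℤ)*0+1 = 1 by ring]; exact h1
        · exact hO m h
  · rintro (h | ⟨n₀, hn₀, hz, hz', hb, ha⟩ | ⟨n₀, hn₀, hz, hb, ha⟩ |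
      ⟨m₀, hm₀, hz, hb, ha⟩)
    · exact bwd_odd f 0 (fun m => (h m).1) (fun n _ => (h n).2)
    · exact bwd_odd f n₀ hb ha
    · exact bwd_odd f n₀ hb ha
    · exact bwd_even f m₀ hb ha
end
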